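/- Let R = k{x₁,…,xₙ; Q, ⪯} be a PBW algebra with Q = {xⱼxᵢ − qⱼᵢxᵢxⱼ − pⱼᵢ : 1 ≤ i < j ≤ n}, and write Xₗ := xₗ⊗1 and Yₗ := 1⊗xₗ in R^env := R ⊗_k R^op. Let ≼ be any one of the four orders ⪯^c, ⪯_c, ⪯*, ⪯_* on ℕ^{2n}. Then R^env is the PBW algebra k{X₁,…,Xₙ,Yₙ,…,Y₁; Q*, ≼}, where Q* = {XⱼXᵢ − qⱼᵢXᵢXⱼ − (pⱼᵢ⊗1) : 1 ≤ i < j ≤ n} ∪ {YⱼXᵢ − XᵢYⱼ : 1 ≤ i,j ≤ n} ∪ {YᵢYⱼ − qⱼᵢYⱼYᵢ − (1⊗pⱼᵢ) : 1 ≤ i < j ≤ n}. Explicitly: Q* is a set of quantum relations in the listed generators X₁,…,Xₙ,Yₙ,…,Y₁ bounded by the admissible order ≼; the canonical k-algebra homomorphism from the quotient of the free algebra on X₁,…,Xₙ,Yₙ,…,Y₁ by the two-sided ideal generated by Q* to R^env is an isomorphism; and the standard monomials X₁^{a₁}⋯Xₙ^{aₙ}·Yₙ^{c₁}⋯Y₁^{cₙ}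 = x^a ⊗ x^{c^op}, for (a,c) ∈ ℕ^{2n}, form a k-basis of R^env. -/

import Mathlib

open TensorProduct MulOpposite

set_option synthInstance.maxHeartbeats 1000000
set_option maxHeartbeats 1000000

noncomputable section

/-- An admissible order on a commutative monoid of exponents: a total order for which `0`
is smallest and which is compatible with addition. -/
def IsAdmissible {E : Type*} [AddCommMonoid E] (le : E → E → Prop) : Prop :=
  (∀ a b, le a b ∨ le b a) ∧
  (∀ a b, le a b → le b a → a = b) ∧
  (∀ a b c, le a b → le b c → le a c) ∧
  (∀ a, le 0 a) ∧
  (∀ a b c, le a b → le (a + c) (b + c))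

/-- The strict part of an order. -/
def ltOf {E : Type*} (le : E → E → Prop) (a b : E) : Prop := le a b ∧ a ≠ b

/-- `α^op`: the reversal of a multi-exponent. -/
def expRev {n : ℕ} (α : Fin n → ℕ) : Fin n → ℕ := fun i => α i.rev

/-- The order `⪯^op` on exponents: `α ⪯^op β ↔ α^op ⪯ β^op`. -/
def opOrd {n : ℕ} (le : (Fin n → ℕ) → (Fin n → ℕ) → Prop) :
    (Fin n → ℕ) → (Fin n → ℕ) → Prop := fun a b => le (expRev a) (expRev b)

/-- The up-component composition order `⪯^c` on `ℕⁿ × ℕⁿ`. -/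
def upCompOrd {n : ℕ} (le : (Fin n → ℕ) → (Fin n → ℕ) → Prop) :
    ((Fin n → ℕ) × (Fin n → ℕ)) → ((Fin n → ℕ) × (Fin n → ℕ)) → Prop := fun a b =>
  a = b ∨ ltOf le (a.1 + expRev a.2) (b.1 + expRev b.2) ∨
    (a.1 + expRev a.2 = b.1 + expRev b.2 ∧ ltOf le (expRev a.2) (expRev b.2))

/-- The down-component composition order `⪯_c` on `ℕⁿ × ℕⁿ`. -/
def downCompOrd {n : ℕ} (le : (Fin n → ℕ) → (Fin n → ℕ) → Prop) :
    ((Fin n → ℕ) × (Fin n → ℕ)) → ((Fin n → ℕ) × (Fin n → ℕ)) → Prop := fun a b =>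
  a = b ∨ ltOf le (a.1 + expRev a.2) (b.1 + expRev b.2) ∨
    (a.1 + expRev a.2 = b.1 + expRev b.2 ∧ ltOf le a.1 b.1)

/-- The elimination order `⪯*` on `ℕⁿ × ℕⁿ` built from `⪯` and `⪯^op`. -/
def elimUpOrd {n : ℕ} (le : (Fin n → ℕ) → (Fin n → ℕ) → Prop) :
    ((Fin n → ℕ) × (Fin n → ℕ)) → ((Fin n → ℕ) × (Fin n → ℕ)) → Prop := fun a b =>
  a = b ∨ ltOf le a.1 b.1 ∨ (a.1 = b.1 ∧ ltOf (opOrd le) a.2 b.2)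

/-- The elimination order `⪯_*` on `ℕⁿ × ℕⁿ` built from `⪯` and `⪯^op`. -/
def elimDownOrd {n : ℕ} (le : (Fin n → ℕ) → (Fin n → ℕ) → Prop) :
    ((Fin n → ℕ) × (Fin n → ℕ)) → ((Fin n → ℕ) × (Fin n → ℕ)) → Prop := fun a b =>
  a = b ∨ ltOf (opOrd le) a.2 b.2 ∨ (a.2 = b.2 ∧ ltOf le a.1 b.1)

/-- The strict TOP (term over position) order on `I × Fin m` built from a strict order on `I`. -/
def topLt {I : Type*} {m : ℕ} (lt : I → I → Prop) (a b : I × Fin m) : Prop :=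
  lt a.1 b.1 ∨ (a.1 = b.1 ∧ b.2 < a.2)

/-- The strict POT (position over term) order on `I × Fin m` built from a strict order on `I`. -/
def potLt {I : Type*} {m : ℕ} (lt : I → I → Prop) (a b : I × Fin m) : Prop :=
  b.2 < a.2 ∨ (a.2 = b.2 ∧ lt a.1 b.1)

/-- The standard monomial `x^α = x₁^{α₁} ⋯ xₙ^{αₙ}` (ordered product). -/
def stdMon {n : ℕ} {A : Type*} [Monoid A] (x : Fin n → A) (α : Fin n → ℕ) : A :=
  ((List.finRange n).map fun i => x i ^ α i).prod

/-- The quantum relation `xⱼxᵢ − qᵢⱼ xᵢxⱼ − pᵢⱼ` (for `i < j`) as an element of the free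
algebra; here `pᵢⱼ` is recorded by its coefficients on standard monomials. -/
def quantumRel (k : Type*) [Field k] {n : ℕ} (q : Fin n → Fin n → k)
    (p : Fin n → Fin n → ((Fin n → ℕ) →₀ k)) (i j : Fin n) : FreeAlgebra k (Fin n) :=
  FreeAlgebra.ι k j * FreeAlgebra.ι k i
    - q i j • (FreeAlgebra.ι k i * FreeAlgebra.ι k j)
    - (p i j).sum fun γ c => c • stdMon (FreeAlgebra.ι k) γ

/-- `R` is the PBW algebra `k{x₁,…,xₙ; Q, ⪯}`, where the relation for `i < j` reads
`xⱼxᵢ = qᵢⱼ xᵢxⱼ + pᵢⱼ`: the order is admissible, the `q`'s are nonzero, the tails `p` are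
bounded by `⪯`, the canonical map from the free algebra is surjective with kernel the two-sided
ideal generated by the relations, and the standard monomials form a `k`-basis. -/
def IsPBW (k : Type*) [Field k] {n : ℕ} (R : Type*) [Ring R] [Algebra k R]
    (x : Fin n → R) (q : Fin n → Fin n → k) (p : Fin n → Fin n → ((Fin n → ℕ) →₀ k))
    (le : (Fin n → ℕ) → (Fin n → ℕ) → Prop) : Prop :=
  IsAdmissible le ∧
  (∀ i j : Fin n, i < j → q i j ≠ 0) ∧
  (∀ i j : Fin n, i < j → ∀ γ ∈ (p i j).support,
      ltOf le γ (Pi.single i 1 + Pi.single j 1)) ∧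
  Function.Surjective (FreeAlgebra.lift k x) ∧
  (∀ a : FreeAlgebra k (Fin n),
      FreeAlgebra.lift k x a = 0 ↔
        a ∈ TwoSidedIdeal.span {y | ∃ i j : Fin n, i < j ∧ y = quantumRel k q p i j}) ∧
  LinearIndependent k (stdMon x) ∧
  Submodule.span k (Set.range (stdMon x)) = ⊤

section Env

variable {k R : Type*} [Field k] [Ring R] [Algebra k R]

/-- The left `R^env = R ⊗[k] Rᵐᵒᵖ`-module structure on `R`, given by
`(r ⊗ r') • f = r * f * r'`. -/
noncomputable instance (priority := 100) envModule : Module (R ⊗[k] Rᵐᵒᵖ) R :=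
  TensorProduct.Algebra.module

/-- The multiplication map `𝔪 : R^env → R`, `r ⊗ r' ↦ r r'`, as a morphism of left
`R^env`-modules. -/
noncomputable def mulE (k R : Type*) [Field k] [Ring R] [Algebra k R] :
    (R ⊗[k] Rᵐᵒᵖ) →ₗ[R ⊗[k] Rᵐᵒᵖ] R :=
  LinearMap.toSpanSingleton _ _ (1 : R)

/-- The map `𝔪^s : (R^env)^s → R^s` applying `𝔪` coordinatewise, as a morphism of left
`R^env`-modules. -/
noncomputable def mulS (k R : Type*) [Field k] [Ring R] [Algebra k R] (s : ℕ) :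
    (Fin s → R ⊗[k] Rᵐᵒᵖ) →ₗ[R ⊗[k] Rᵐᵒᵖ] (Fin s → R) :=
  LinearMap.pi fun i => (mulE k R).comp (LinearMap.proj i)

/-- `f ⊗ 1 := (f₁ ⊗ 1, …, f_s ⊗ 1)`. -/
def tensorOne (k : Type*) [Field k] {R : Type*} [Ring R] [Algebra k R] {s : ℕ}
    (f : Fin s → R) : Fin s → R ⊗[k] Rᵐᵒᵖ := fun i => f i ⊗ₜ[k] (1 : Rᵐᵒᵖ)

/-- `1 ⊗ f := (1 ⊗ f₁, …, 1 ⊗ f_s)`. -/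
def oneTensor (k : Type*) [Field k] {R : Type*} [Ring R] [Algebra k R] {s : ℕ}
    (f : Fin s → R) : Fin s → R ⊗[k] Rᵐᵒᵖ := fun i => (1 : R) ⊗ₜ[k] op (f i)

/-- The map `(h₁,…,h_m) ↦ Σᵢ hᵢ • wᵢ`, whose kernel is the (two-sided/left) syzygy module
of the family `w`. -/
noncomputable def syzMap (A : Type*) [Ring A] {M : Type*} [AddCommGroup M] [Module A M]
    {ι : Type*} [Fintype ι] (w : ι → M) : (ι → A) →ₗ[A] M where
  toFun h := ∑ l, h l • w l
  map_add' h h' := by simp [add_smul, Finset.sum_add_distrib]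
  map_smul' a h := by simp [mul_smul, Finset.smul_sum]

end Env

/-- `e` is the exponent (leading index) of the nonzero element `h` of a free module of rank `m`
over an algebra with a standard-monomial basis `b` indexed by `I`, with respect to a strict
order `lt` on `I × Fin m`: the coordinate of `h` at `e` is nonzero and every other index with
nonzero coordinate is smaller. -/
def IsExpOf {k R0 I : Type*} [Field k] [AddCommGroup R0] [Module k R0] {m : ℕ}
    (b : Module.Basis I k R0) (lt : I × Fin m → I × Fin m → Prop)
    (h : Fin m → R0) (e : I × Fin m) : Prop :=
  b.repr (h e.2) e.1 ≠ 0 ∧ ∀ β i, b.repr (h i) β ≠ 0 → (β, i) = e ∨ lt ((β, i)) e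

/-- `G` is a Gröbner basis of the `A`-submodule `N` of the free module `(Fin m → R0)`:
`G ⊆ N \ {0}`, `G` generates `N` over `A`, and the leading exponent of every nonzero element
of `N` is a translate (by some `δ`) of the leading exponent of some element of `G`, in the
same component.  Taking `A = R^env` acting on `R0 = R^env` gives left Gröbner bases, and
taking `A = R^env` acting on `R0 = R` gives two-sided Gröbner bases. -/
def IsGB {k R0 A I : Type*} [Field k] [AddCommGroup R0] [Module k R0] [Ring A] [Add I]
    {m : ℕ} [Module A (Fin m → R0)]
    (b : Module.Basis I k R0) (lt : I × Fin m → I × Fin m → Prop)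
    (N : Submodule A (Fin m → R0)) (G : Set (Fin m → R0)) : Prop :=
  G ⊆ (N : Set (Fin m → R0)) \ {0} ∧ Submodule.span A G = N ∧
  ∀ h, h ∈ N → h ≠ 0 →
    ∃ g ∈ G, ∃ γ δ i, IsExpOf b lt g (γ, i) ∧ IsExpOf b lt h (γ + δ, i)

end

section EnvPBW

variable {k : Type*} [Field k]

/-- The first `n` components of an exponent in `ℕ^{2n}`. -/
def splitL {m n : ℕ} (α : Fin (m + n) → ℕ) : Fin m → ℕ := fun i => α (Fin.castAdd n i)

/-- The last `n` components of an exponent in `ℕ^{2n}`. -/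
def splitR {m n : ℕ} (α : Fin (m + n) → ℕ) : Fin n → ℕ := fun j => α (Fin.natAdd m j)

/-- An order on pairs `ℕⁿ × ℕⁿ` transported to `ℕ^{n+n}`. -/
def liftPairOrd {n : ℕ}
    (o : ((Fin n → ℕ) × (Fin n → ℕ)) → ((Fin n → ℕ) × (Fin n → ℕ)) → Prop)
    (α β : Fin (n + n) → ℕ) : Prop :=
  o (splitL α, splitR α) (splitL β, splitR β)

variable {R : Type*} [Ring R] [Algebra k R] {n : ℕ}

/-- The generators `X₁,…,Xₙ,Yₙ,…,Y₁` of `R^env`, where `Xₗ = xₗ⊗1`, `Yₗ = 1⊗xₗ`. -/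
noncomputable def envGens (x : Fin n → R) : Fin (n + n) → R ⊗[k] Rᵐᵒᵖ :=
  Fin.append (fun l => x l ⊗ₜ[k] (1 : Rᵐᵒᵖ)) (fun l => (1 : R) ⊗ₜ[k] op (x l.rev))

/-- The scalars of the quantum relations `Q*` of `R^env`. -/
def qEnv (q : Fin n → Fin n → k) (i j : Fin (n + n)) : k :=
  if hi : (i : ℕ) < n then
    if hj : (j : ℕ) < n then q ⟨i, hi⟩ ⟨j, hj⟩ else 1
  else
    if hj : (j : ℕ) < n then 1
    else q (Fin.rev ⟨(j : ℕ) - n, by have := j.isLt; omega⟩)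
           (Fin.rev ⟨(i : ℕ) - n, by have := i.isLt; omega⟩)

/-- The tails of the quantum relations `Q*` of `R^env`. -/
noncomputable def pEnv (p : Fin n → Fin n → ((Fin n → ℕ) →₀ k)) (i j : Fin (n + n)) :
    (Fin (n + n) → ℕ) →₀ k :=
  if hi : (i : ℕ) < n then
    if hj : (j : ℕ) < n then
      Finsupp.mapDomain (fun α : Fin n → ℕ => Fin.append α 0) (p ⟨i, hi⟩ ⟨j, hj⟩)
    else 0
  else
    if hj : (j : ℕ) < n then 0
    else Finsupp.mapDomain (fun γ : Fin n → ℕ => Fin.append 0 (expRev γ))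
      (p (Fin.rev ⟨(j : ℕ) - n, by have := j.isLt; omega⟩)
         (Fin.rev ⟨(i : ℕ) - n, by have := i.isLt; omega⟩))

section AuxOrd


theorem isAdmissible_pair {E E1 E2 : Type*} [AddCommMonoid E]
    [AddCancelCommMonoid E1] [AddCancelCommMonoid E2]
    {le1 : E1 → E1 → Prop} {le2 : E2 → E2 → Prop}
    (h1 : IsAdmissible le1) (h2 : IsAdmissible le2)
    (f : E → E1) (g : E → E2)
    (hf : ∀ a b, f (a + b) = f a + f b) (hg : ∀ a b, g (a + b) = g a + g b)
    (hf0 : f 0 = 0) (hg0 : g 0 = 0)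
    (hinj : ∀ a b, f a = f b → g a = g b → a = b) :
    IsAdmissible (fun a b : E =>
      a = b ∨ ltOf le1 (f a) (f b) ∨ (f a = f b ∧ ltOf le2 (g a) (g b))) := by
  obtain ⟨t1, as1, tr1, z1, ad1⟩ := h1
  obtain ⟨t2, as2, tr2, z2, ad2⟩ := h2
  refine ⟨?_, ?_, ?_, ?_, ?_⟩
  · intro a b
    by_cases hfe : f a = f b
    · by_cases hge : g a = g b
      · exact Or.inl (Or.inl (hinj _ _ hfe hge))
      · rcases t2 (g a) (g b) with h | h
        · exact Or.inl (Or.inr (Or.inr ⟨hfe, h, hge⟩))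
        · exact Or.inr (Or.inr (Or.inr ⟨hfe.symm, h, Ne.symm hge⟩))
    · rcases t1 (f a) (f b) with h | h
      · exact Or.inl (Or.inr (Or.inl ⟨h, hfe⟩))
      · exact Or.inr (Or.inr (Or.inl ⟨h, Ne.symm hfe⟩))
  · rintro a b (rfl | ⟨h, hne⟩ | ⟨he, h, hne⟩) hba
    · rfl
    · rcases hba with rfl | ⟨h', _⟩ | ⟨he', _⟩
      · rfl
      · exact absurd (as1 _ _ h h') hne
      · exact absurd he'.symm hne
    · rcases hba with rfl | ⟨h', hne'⟩ | ⟨_, h', hne'⟩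
      · rfl
      · exact absurd he.symm hne'
      · exact absurd (as2 _ _ h h') hne
  · rintro a b c (rfl | ⟨h, hne⟩ | ⟨he, h, hne⟩) hbc
    · exact hbc
    · rcases hbc with rfl | ⟨h', hne'⟩ | ⟨he', h', hne'⟩
      · exact Or.inr (Or.inl ⟨h, hne⟩)
      · refine Or.inr (Or.inl ⟨tr1 _ _ _ h h', fun e => hne ?_⟩)
        exact as1 _ _ h (e ▸ h')
      · exact Or.inr (Or.inl ⟨he' ▸ h, he' ▸ hne⟩)
    · rcases hbc with rfl | ⟨h', hne'⟩ | ⟨he', h', hne'⟩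
      · exact Or.inr (Or.inr ⟨he, h, hne⟩)
      · exact Or.inr (Or.inl ⟨he ▸ h', he ▸ hne'⟩)
      · refine Or.inr (Or.inr ⟨he.trans he', tr2 _ _ _ h h', fun e => hne ?_⟩)
        exact as2 _ _ h (e ▸ h')
  · intro a
    by_cases hfe : f 0 = f a
    · by_cases hge : g 0 = g a
      · exact Or.inl (hinj _ _ hfe hge)
      · exact Or.inr (Or.inr ⟨hfe, hg0 ▸ z2 (g a), hge⟩)
    · exact Or.inr (Or.inl ⟨hf0 ▸ z1 (f a), hfe⟩)
  · rintro a b c (rfl | ⟨h, hne⟩ | ⟨he, h, hne⟩)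
    · exact Or.inl rfl
    · refine Or.inr (Or.inl ⟨?_, fun e => hne ?_⟩)
      · rw [hf, hf]; exact ad1 _ _ _ h
      · rw [hf, hf] at e; exact add_right_cancel e
    · refine Or.inr (Or.inr ⟨by rw [hf, hf, he], ?_, fun e => hne ?_⟩)
      · rw [hg, hg]; exact ad2 _ _ _ h
      · rw [hg, hg] at e; exact add_right_cancel e

theorem isAdmissible_comp {E F : Type*} [AddCommMonoid E] [AddCommMonoid F]
    {o : F → F → Prop} (h : IsAdmissible o) (s : E → F)
    (hs : ∀ a b, s (a + b) = s a + s b) (hs0 : s 0 = 0)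
    (hinj : Function.Injective s) :
    IsAdmissible (fun a b => o (s a) (s b)) := by
  obtain ⟨t, as, tr, z, ad⟩ := h
  refine ⟨fun a b => t _ _, fun a b hab hba => hinj (as _ _ hab hba),
    fun a b c => tr _ _ _, fun a => ?_, fun a b c hab => ?_⟩
  · show o (s 0) (s a); rw [hs0]; exact z (s a)
  · show o (s (a + c)) (s (b + c)); rw [hs, hs]; exact ad _ _ _ hab

theorem expRev_add {n : ℕ} (a b : Fin n → ℕ) : expRev (a + b) = expRev a + expRev b := rfl

theorem expRev_zero {n : ℕ} : expRev (0 : Fin n → ℕ) = 0 := rfl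

theorem expRev_expRev {n : ℕ} (a : Fin n → ℕ) : expRev (expRev a) = a := by
  funext i; simp [expRev]

theorem expRev_inj {n : ℕ} : Function.Injective (expRev (n := n)) := by
  intro a b h
  rw [← expRev_expRev a, h, expRev_expRev]

theorem isAdmissible_opOrd {n : ℕ} {le : (Fin n → ℕ) → (Fin n → ℕ) → Prop}
    (h : IsAdmissible le) : IsAdmissible (opOrd le) := by
  obtain ⟨t, as, tr, z, ad⟩ := h
  exact ⟨fun a b => t _ _, fun a b hab hba => expRev_inj (as _ _ hab hba),
    fun a b c => tr _ _ _, fun a => by have := z (expRev a); rwa [opOrd, expRev_zero],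
    fun a b c hab => by unfold opOrd; rw [expRev_add, expRev_add]; exact ad _ _ _ hab⟩


variable {n : ℕ} {le : (Fin n → ℕ) → (Fin n → ℕ) → Prop}


variable {n : ℕ} {le : (Fin n → ℕ) → (Fin n → ℕ) → Prop}

theorem append_splitLR {m l : ℕ} (α : Fin (m + l) → ℕ) :
    Fin.append (splitL α) (splitR α) = α := by
  funext i
  cases i using Fin.addCases with
  | left i => rw [Fin.append_left]; rfl
  | right j => rw [Fin.append_right]; rfl

theorem split_inj {m l : ℕ} {α β : Fin (m + l) → ℕ}
    (h1 : splitL α = splitL β) (h2 : splitR α = splitR β) : α = β := by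
  rw [← append_splitLR α, ← append_splitLR β, h1, h2]

theorem isAdmissible_upCompOrd (h : IsAdmissible le) : IsAdmissible (upCompOrd le) := by
  have := isAdmissible_pair (E := (Fin n → ℕ) × (Fin n → ℕ)) h h
    (fun a => a.1 + expRev a.2) (fun a => expRev a.2)
    (fun a b => by show (a.1 + b.1) + expRev (a.2 + b.2) = _; rw [show expRev (a.2+b.2) = expRev a.2 + expRev b.2 from rfl]; exact add_add_add_comm _ _ _ _)
    (fun a b => rfl) (by show (0:Fin n → ℕ) + expRev 0 = 0; rfl) rfl
    (fun a b hf hg => by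
      refine Prod.ext ?_ (expRev_inj hg)
      rw [hg] at hf
      exact add_right_cancel hf)
  exact this

theorem isAdmissible_downCompOrd (h : IsAdmissible le) : IsAdmissible (downCompOrd le) := by
  have := isAdmissible_pair (E := (Fin n → ℕ) × (Fin n → ℕ)) h h
    (fun a => a.1 + expRev a.2) (fun a => a.1)
    (fun a b => by show (a.1 + b.1) + expRev (a.2 + b.2) = _; rw [show expRev (a.2+b.2) = expRev a.2 + expRev b.2 from rfl]; exact add_add_add_comm _ _ _ _)
    (fun a b => rfl) (by show (0:Fin n → ℕ) + expRev 0 = 0; rfl) rfl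
    (fun a b hf hg => by
      rw [hg] at hf
      exact Prod.ext hg (expRev_inj (add_left_cancel hf)))
  exact this

theorem isAdmissible_elimUpOrd (h : IsAdmissible le) : IsAdmissible (elimUpOrd le) := by
  have := isAdmissible_pair (E := (Fin n → ℕ) × (Fin n → ℕ)) h (isAdmissible_opOrd h)
    Prod.fst Prod.snd (fun a b => rfl) (fun a b => rfl) rfl rfl
    (fun a b hf hg => Prod.ext hf hg)
  exact this

theorem isAdmissible_elimDownOrd (h : IsAdmissible le) : IsAdmissible (elimDownOrd le) := by
  have := isAdmissible_pair (E := (Fin n → ℕ) × (Fin n → ℕ)) (isAdmissible_opOrd h) h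
    Prod.snd Prod.fst (fun a b => rfl) (fun a b => rfl) rfl rfl
    (fun a b hf hg => Prod.ext hg hf)
  exact this

theorem isAdmissible_liftPairOrd
    {o : ((Fin n → ℕ) × (Fin n → ℕ)) → ((Fin n → ℕ) × (Fin n → ℕ)) → Prop}
    (h : IsAdmissible o) : IsAdmissible (liftPairOrd o) := by
  have := isAdmissible_comp h (fun α : Fin (n + n) → ℕ => (splitL α, splitR α))
    (fun a b => rfl) rfl (fun a b hab => split_inj (congrArg Prod.fst hab) (congrArg Prod.snd hab))
  exact this

-- strict-part helpers for the tail bound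
theorem upCompOrd_X (hx : ltOf le a b) : upCompOrd le (a, 0) (b, 0) := by
  refine Or.inr (Or.inl ?_)
  show ltOf le (a + expRev 0) (b + expRev 0)
  rw [show expRev (0 : Fin n → ℕ) = 0 from rfl, add_zero, add_zero]; exact hx

theorem downCompOrd_X (hx : ltOf le a b) : downCompOrd le (a, 0) (b, 0) := by
  refine Or.inr (Or.inl ?_)
  show ltOf le (a + expRev 0) (b + expRev 0)
  rw [show expRev (0 : Fin n → ℕ) = 0 from rfl, add_zero, add_zero]; exact hx

theorem elimUpOrd_X (hx : ltOf le a b) : elimUpOrd le (a, 0) (b, 0) :=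
  Or.inr (Or.inl hx)

theorem elimDownOrd_X (hx : ltOf le a b) : elimDownOrd le (a, 0) (b, 0) :=
  Or.inr (Or.inr ⟨rfl, hx⟩)

theorem upCompOrd_Y (hy : ltOf le c d) : upCompOrd le (0, expRev c) (0, expRev d) := by
  refine Or.inr (Or.inl ?_)
  show ltOf le (0 + expRev (expRev c)) (0 + expRev (expRev d))
  rw [zero_add, zero_add, expRev_expRev, expRev_expRev]; exact hy

theorem downCompOrd_Y (hy : ltOf le c d) : downCompOrd le (0, expRev c) (0, expRev d) := by
  refine Or.inr (Or.inl ?_)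
  show ltOf le (0 + expRev (expRev c)) (0 + expRev (expRev d))
  rw [zero_add, zero_add, expRev_expRev, expRev_expRev]; exact hy

theorem elimUpOrd_Y (hy : ltOf le c d) : elimUpOrd le (0, expRev c) (0, expRev d) := by
  refine Or.inr (Or.inr ⟨rfl, ?_, fun e => hy.2 (expRev_inj e)⟩)
  show le (expRev (expRev c)) (expRev (expRev d))
  rw [expRev_expRev, expRev_expRev]; exact hy.1

theorem elimDownOrd_Y (hy : ltOf le c d) : elimDownOrd le (0, expRev c) (0, expRev d) := by
  refine Or.inr (Or.inl ⟨?_, fun e => hy.2 (expRev_inj e)⟩)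
  show le (expRev (expRev c)) (expRev (expRev d))
  rw [expRev_expRev, expRev_expRev]; exact hy.1



end AuxOrd

section AuxMon
variable {n : ℕ} {A B : Type*} [Monoid A] [Monoid B]

variable {n : ℕ} {A B : Type*} [Monoid A] [Monoid B]

theorem stdMon_zero (x : Fin n → A) : stdMon x 0 = 1 := by
  rw [stdMon]
  refine List.prod_eq_one ?_
  intro y hy
  simp only [List.mem_map] at hy
  obtain ⟨i, _, rfl⟩ := hy
  exact pow_zero _

theorem map_stdMon {F : Type*} [FunLike F A B] [MonoidHomClass F A B] (f : F)
    (x : Fin n → A) (α : Fin n → ℕ) :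
    f (stdMon x α) = stdMon (fun i => f (x i)) α := by
  rw [stdMon, stdMon, map_list_prod, List.map_map]
  exact congrArg List.prod (List.map_congr_left fun i _ => by simp [Function.comp, map_pow])

theorem stdMon_append {m l : ℕ} (x : Fin (m + l) → A) (a : Fin m → ℕ) (c : Fin l → ℕ) :
    stdMon x (Fin.append a c) =
      stdMon (fun i => x (Fin.castAdd l i)) a * stdMon (fun j => x (Fin.natAdd m j)) c := by
  rw [stdMon, stdMon, stdMon, ← List.ofFn_eq_map, List.ofFn_add, List.prod_append,
    ← List.ofFn_eq_map, ← List.ofFn_eq_map]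
  congr 1
  · exact congrArg List.prod (congrArg List.ofFn (funext fun i => by rw [show Fin.castLE _ i = Fin.castAdd l i from rfl, Fin.append_left]))
  · exact congrArg List.prod (congrArg List.ofFn (funext fun j => by rw [Fin.append_right]))

theorem list_rev_map {C : Type*} (g : Fin n → C) :
    (List.map g (List.finRange n)).reverse = List.map (fun i => g i.rev) (List.finRange n) := by
  rw [← List.map_reverse, List.finRange_reverse, List.map_map]
  rfl

theorem stdMon_op (y : Fin n → A) (c : Fin n → ℕ) :
    stdMon (fun l => op (y l.rev)) c = op (stdMon y (expRev c)) := by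
  rw [stdMon, stdMon, MulOpposite.op_list_prod, List.map_map, list_rev_map]
  exact congrArg List.prod (List.map_congr_left fun i _ => by
    simp [Function.comp, expRev, Fin.rev_rev, MulOpposite.op_pow])

theorem stdMon_succ (x : Fin (n + 1) → A) (α : Fin (n + 1) → ℕ) :
    stdMon x α = x 0 ^ α 0 * stdMon (fun i => x i.succ) (fun i => α i.succ) := by
  rw [stdMon, List.finRange_succ, List.map_cons, List.prod_cons, List.map_map, stdMon]
  rfl

theorem stdMon_single (x : Fin n → A) (i : Fin n) : stdMon x (Pi.single i 1) = x i := by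
  induction n with
  | zero => exact i.elim0
  | succ m ih =>
    rw [stdMon_succ]
    cases i using Fin.cases with
    | zero =>
      rw [Pi.single_eq_same, pow_one]
      have : (fun l : Fin m => (Pi.single (0 : Fin (m+1)) (1:ℕ) : Fin (m+1) → ℕ) l.succ) = 0 := by
        funext l; exact Pi.single_eq_of_ne (Fin.succ_ne_zero l) 1
      rw [this, stdMon_zero, mul_one]
    | succ j =>
      rw [Pi.single_eq_of_ne (Ne.symm (Fin.succ_ne_zero j)), pow_zero, one_mul]
      have : (fun l : Fin m => (Pi.single (j.succ : Fin (m+1)) (1:ℕ) : Fin (m+1) → ℕ) l.succ) = Pi.single j 1 := by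
        funext l
        rcases eq_or_ne l j with rfl | hl
        · rw [Pi.single_eq_same, Pi.single_eq_same]
        · rw [Pi.single_eq_of_ne (fun e => hl (Fin.succ_injective _ e)),
            Pi.single_eq_of_ne hl]
      rw [this]
      exact ih _ j



end AuxMon


section AuxEnv2
variable {k : Type*} [Field k] {R : Type*} [Ring R] [Algebra k R] {n : ℕ}

theorem envGens_castAdd (x : Fin n → R) (l : Fin n) :
    envGens (k := k) x (Fin.castAdd n l) = x l ⊗ₜ[k] (1 : Rᵐᵒᵖ) := by
  rw [envGens, Fin.append_left]

theorem envGens_natAdd (x : Fin n → R) (l : Fin n) :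
    envGens (k := k) x (Fin.natAdd n l) = (1 : R) ⊗ₜ[k] op (x l.rev) := by
  rw [envGens, Fin.append_right]

theorem stdMon_envGens (x : Fin n → R) (a c : Fin n → ℕ) :
    stdMon (envGens (k := k) x) (Fin.append a c) =
      stdMon x a ⊗ₜ[k] op (stdMon x (expRev c)) := by
  rw [stdMon_append]
  have h1 : (fun i => envGens (k := k) x (Fin.castAdd n i)) =
      (fun i => (Algebra.TensorProduct.includeLeft : R →ₐ[k] R ⊗[k] Rᵐᵒᵖ) (x i)) := by
    funext i; rw [envGens_castAdd]; rfl
  have h2 : (fun j => envGens (k := k) x (Fin.natAdd n j)) =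
      (fun j => (Algebra.TensorProduct.includeRight : Rᵐᵒᵖ →ₐ[k] R ⊗[k] Rᵐᵒᵖ)
        (op (x j.rev))) := by
    funext j; rw [envGens_natAdd]; rfl
  rw [h1, h2, ← map_stdMon (Algebra.TensorProduct.includeLeft : R →ₐ[k] R ⊗[k] Rᵐᵒᵖ),
    ← map_stdMon (Algebra.TensorProduct.includeRight : Rᵐᵒᵖ →ₐ[k] R ⊗[k] Rᵐᵒᵖ), stdMon_op]
  simp [Algebra.TensorProduct.tmul_mul_tmul]

/-- The set of quantum relations. -/
def relSet (k : Type*) [Field k] {m : ℕ} (q : Fin m → Fin m → k)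
    (p : Fin m → Fin m → ((Fin m → ℕ) →₀ k)) : Set (FreeAlgebra k (Fin m)) :=
  {y | ∃ i j : Fin m, i < j ∧ y = quantumRel k q p i j}

noncomputable def phiX (k : Type*) [Field k] (n : ℕ) :
    FreeAlgebra k (Fin n) →ₐ[k] FreeAlgebra k (Fin (n + n)) :=
  FreeAlgebra.lift k fun l => FreeAlgebra.ι k (Fin.castAdd n l)

noncomputable def phiY (k : Type*) [Field k] (n : ℕ) :
    FreeAlgebra k (Fin n) →ₐ[k] (FreeAlgebra k (Fin (n + n)))ᵐᵒᵖ :=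
  FreeAlgebra.lift k fun l => op (FreeAlgebra.ι k (Fin.natAdd n l.rev))

theorem qEnv_XX (q : Fin n → Fin n → k) (i j : Fin n) :
    qEnv q (Fin.castAdd n i) (Fin.castAdd n j) = q i j := by
  rw [qEnv, dif_pos (by simpa using i.isLt), dif_pos (by simpa using j.isLt)]
  simp [Fin.eta]

theorem qEnv_XY (q : Fin n → Fin n → k) (i j : Fin n) :
    qEnv q (Fin.castAdd n i) (Fin.natAdd n j) = 1 := by
  rw [qEnv, dif_pos (by simpa using i.isLt), dif_neg (by simp)]

theorem qEnv_YY (q : Fin n → Fin n → k) (i j : Fin n) :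
    qEnv q (Fin.natAdd n i) (Fin.natAdd n j) = q j.rev i.rev := by
  rw [qEnv, dif_neg (by simp), dif_neg (by simp)]
  congr 1 <;> congr 1 <;> ext <;> simp

theorem pEnv_XX (p : Fin n → Fin n → ((Fin n → ℕ) →₀ k)) (i j : Fin n) :
    pEnv p (Fin.castAdd n i) (Fin.castAdd n j) =
      Finsupp.mapDomain (fun α : Fin n → ℕ => Fin.append α 0) (p i j) := by
  rw [pEnv, dif_pos (by simpa using i.isLt), dif_pos (by simpa using j.isLt)]
  congr 1 <;> simp [Fin.eta]

theorem pEnv_XY (p : Fin n → Fin n → ((Fin n → ℕ) →₀ k)) (i j : Fin n) :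
    pEnv p (Fin.castAdd n i) (Fin.natAdd n j) = 0 := by
  rw [pEnv, dif_pos (by simpa using i.isLt), dif_neg (by simp)]

theorem mk_sub_natAdd (j : Fin n) {h : ((Fin.natAdd n j : Fin (n + n)) : ℕ) - n < n} :
    (⟨((Fin.natAdd n j : Fin (n + n)) : ℕ) - n, h⟩ : Fin n) = j := by
  ext; simp

theorem pEnv_YY (p : Fin n → Fin n → ((Fin n → ℕ) →₀ k)) (i j : Fin n) :
    pEnv p (Fin.natAdd n i) (Fin.natAdd n j) =
      Finsupp.mapDomain (fun γ : Fin n → ℕ => Fin.append (0 : Fin n → ℕ) (expRev γ))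
        (p j.rev i.rev) := by
  rw [pEnv, dif_neg (by simp), dif_neg (by simp), mk_sub_natAdd, mk_sub_natAdd]

theorem phiX_stdMon (γ : Fin n → ℕ) :
    phiX k n (stdMon (FreeAlgebra.ι k) γ) = stdMon (FreeAlgebra.ι k) (Fin.append γ 0) := by
  rw [map_stdMon, stdMon_append, stdMon_zero, mul_one]
  exact congrArg (fun f => stdMon f γ) (funext fun l => FreeAlgebra.lift_ι_apply _ _)

theorem phiY_stdMon (γ : Fin n → ℕ) :
    unop (phiY k n (stdMon (FreeAlgebra.ι k) γ)) =
      stdMon (FreeAlgebra.ι k) (Fin.append 0 (expRev γ)) := by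
  rw [map_stdMon, stdMon_append, stdMon_zero, one_mul]
  have h : (fun i => phiY k n (FreeAlgebra.ι k i)) =
      (fun l : Fin n => op ((FreeAlgebra.ι k ∘ Fin.natAdd n) l.rev)) :=
    funext fun i => FreeAlgebra.lift_ι_apply _ _
  rw [h, stdMon_op, unop_op]
  rfl

end AuxEnv2


section AuxRel
variable {k : Type*} [Field k] {n : ℕ}

theorem phiX_ι (l : Fin n) :
    phiX k n (FreeAlgebra.ι k l) = FreeAlgebra.ι k (Fin.castAdd n l) :=
  FreeAlgebra.lift_ι_apply _ _

theorem phiY_ι (l : Fin n) :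
    phiY k n (FreeAlgebra.ι k l) = op (FreeAlgebra.ι k (Fin.natAdd n l.rev)) :=
  FreeAlgebra.lift_ι_apply _ _

theorem phiX_quantumRel (q : Fin n → Fin n → k) (p : Fin n → Fin n → ((Fin n → ℕ) →₀ k))
    (i j : Fin n) :
    phiX k n (quantumRel k q p i j) =
      quantumRel k (qEnv q) (pEnv p) (Fin.castAdd n i) (Fin.castAdd n j) := by
  rw [quantumRel, quantumRel, map_sub, map_sub, map_mul, map_smul, map_mul,
    phiX_ι, phiX_ι, qEnv_XX, pEnv_XX]
  congr 1
  rw [map_finsuppSum, Finsupp.sum_mapDomain_index (fun b => by rw [zero_smul])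
    (fun b m₁ m₂ => by rw [add_smul])]
  exact Finsupp.sum_congr fun γ _ => by rw [map_smul, phiX_stdMon]

theorem quantumRel_XY (q : Fin n → Fin n → k) (p : Fin n → Fin n → ((Fin n → ℕ) →₀ k))
    (i j : Fin n) :
    quantumRel k (qEnv q) (pEnv p) (Fin.castAdd n i) (Fin.natAdd n j) =
      FreeAlgebra.ι k (Fin.natAdd n j) * FreeAlgebra.ι k (Fin.castAdd n i) -
        FreeAlgebra.ι k (Fin.castAdd n i) * FreeAlgebra.ι k (Fin.natAdd n j) := by
  rw [quantumRel, qEnv_XY, pEnv_XY, one_smul, Finsupp.sum_zero_index, sub_zero]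

theorem phiY_quantumRel (q : Fin n → Fin n → k) (p : Fin n → Fin n → ((Fin n → ℕ) →₀ k))
    (a b : Fin n) :
    unop (phiY k n (quantumRel k q p a b)) =
      quantumRel k (qEnv q) (pEnv p) (Fin.natAdd n b.rev) (Fin.natAdd n a.rev) := by
  rw [quantumRel, quantumRel, map_sub, map_sub, map_mul, map_smul, map_mul,
    phiY_ι, phiY_ι, unop_sub, unop_sub, unop_mul, unop_smul, unop_mul, unop_op, unop_op,
    qEnv_YY, pEnv_YY]
  simp only [Fin.rev_rev]
  congr 1
  rw [map_finsuppSum, Finsupp.sum_mapDomain_index (fun b => by rw [zero_smul])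
    (fun b m₁ m₂ => by rw [add_smul]), Finsupp.sum, Finsupp.sum, Finset.unop_sum]
  refine Finset.sum_congr rfl fun γ _ => ?_
  rw [map_smul, unop_smul, phiY_stdMon]

end AuxRel

section AuxRC
variable {S : Type*} [Ring S] (c : RingCon S)

theorem rc_comm_pow {y z : S} (h : c (y * z) (z * y)) (m : ℕ) :
    c (y * z ^ m) (z ^ m * y) := by
  induction m with
  | zero => rw [pow_zero, one_mul, mul_one]; exact c.refl y
  | succ m ih =>
    rw [pow_succ', ← mul_assoc]
    refine c.trans (c.mul h (c.refl (z ^ m))) ?_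
    rw [mul_assoc, mul_assoc]
    exact c.mul (c.refl z) ih

theorem rc_comm_pow' {y z : S} (h : c (y * z) (z * y)) (m : ℕ) :
    c (y ^ m * z) (z * y ^ m) := by
  induction m with
  | zero => rw [pow_zero, one_mul, mul_one]; exact c.refl z
  | succ m ih =>
    rw [pow_succ, mul_assoc]
    refine c.trans (c.mul (c.refl (y ^ m)) h) ?_
    rw [← mul_assoc, ← mul_assoc]
    exact c.mul ih (c.refl y)

theorem rc_comm_list {y : S} (L : List S) (h : ∀ z ∈ L, c (y * z) (z * y)) :
    c (y * L.prod) (L.prod * y) := by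
  induction L with
  | nil => rw [List.prod_nil, one_mul, mul_one]; exact c.refl y
  | cons a t ih =>
    rw [List.prod_cons, ← mul_assoc]
    refine c.trans (c.mul (h a List.mem_cons_self) (c.refl t.prod)) ?_
    rw [mul_assoc, mul_assoc]
    exact c.mul (c.refl a) (ih fun z hz => h z (List.mem_cons_of_mem a hz))

theorem rc_comm_list' {z : S} (L : List S) (h : ∀ y ∈ L, c (y * z) (z * y)) :
    c (L.prod * z) (z * L.prod) := by
  induction L with
  | nil => rw [List.prod_nil, one_mul, mul_one]; exact c.refl z
  | cons a t ih =>
    rw [List.prod_cons, mul_assoc]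
    refine c.trans (c.mul (c.refl a) (ih fun y hy => h y (List.mem_cons_of_mem a hy))) ?_
    rw [← mul_assoc, ← mul_assoc]
    exact c.mul (h a List.mem_cons_self) (c.refl t.prod)

theorem rc_smul {K : Type*} [CommSemiring K] [Algebra K S] (t : K) {a b : S} (h : c a b) :
    c (t • a) (t • b) := by
  rw [Algebra.smul_def, Algebra.smul_def]
  exact c.mul (c.refl _) h

end AuxRC


section AuxIdeal
variable {S T : Type*} [Ring S] [Ring T]

theorem span_map_mem (f : S →+* T) (G : Set S) (I : TwoSidedIdeal T)
    (h : ∀ g ∈ G, f g ∈ I) : ∀ u ∈ TwoSidedIdeal.span G, f u ∈ I := by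
  intro u hu
  rw [TwoSidedIdeal.mem_span_iff] at hu
  have key := hu (TwoSidedIdeal.mk' (f ⁻¹' I)
    (by simp only [Set.mem_preimage, map_zero]; exact I.zero_mem)
    (fun {x y} hx hy => by
      simp only [Set.mem_preimage, map_add] at *; exact I.add_mem hx hy)
    (fun {x} hx => by simp only [Set.mem_preimage, map_neg] at *; exact I.neg_mem hx)
    (fun {x y} hy => by
      simp only [Set.mem_preimage, map_mul] at *; exact I.mul_mem_left _ _ hy)
    (fun {x y} hx => by
      simp only [Set.mem_preimage, map_mul] at *; exact I.mul_mem_right _ _ hx))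
    (fun g hg => (TwoSidedIdeal.mem_mk' _ _ _ _ _ _ _).2 (h g hg))
  exact Set.mem_preimage.1 ((TwoSidedIdeal.mem_mk' (f ⁻¹' I) _ _ _ _ _ u).1 key)

/-- The opposite of a two-sided ideal, as an ideal of the opposite ring. -/
def opIdeal (I : TwoSidedIdeal S) : TwoSidedIdeal Sᵐᵒᵖ :=
  TwoSidedIdeal.mk' (unop ⁻¹' I)
    (by simp only [Set.mem_preimage, unop_zero]; exact I.zero_mem)
    (fun {x y} hx hy => by
      simp only [Set.mem_preimage, unop_add] at *; exact I.add_mem hx hy)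
    (fun {x} hx => by simp only [Set.mem_preimage, unop_neg] at *; exact I.neg_mem hx)
    (fun {x y} hy => by
      simp only [Set.mem_preimage, unop_mul] at *; exact I.mul_mem_right _ _ hy)
    (fun {x y} hx => by
      simp only [Set.mem_preimage, unop_mul] at *; exact I.mul_mem_left _ _ hx)

theorem mem_opIdeal {I : TwoSidedIdeal S} {x : Sᵐᵒᵖ} : x ∈ opIdeal I ↔ unop x ∈ I :=
  TwoSidedIdeal.mem_mk' _ _ _ _ _ _ _

end AuxIdeal


section AuxNF
variable {k : Type*} [Field k] {R : Type*} [Ring R] [Algebra k R] {n : ℕ}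

theorem lift_stdMon (x : Fin n → R) (γ : Fin n → ℕ) :
    FreeAlgebra.lift k x (stdMon (FreeAlgebra.ι k) γ) = stdMon x γ := by
  rw [map_stdMon]
  exact congrArg (fun f => stdMon f γ) (funext fun l => FreeAlgebra.lift_ι_apply _ _)

theorem normal_form_R (x : Fin n → R) (q : Fin n → Fin n → k)
    (p : Fin n → Fin n → ((Fin n → ℕ) →₀ k))
    (le : (Fin n → ℕ) → (Fin n → ℕ) → Prop) (hpbw : IsPBW k R x q p le)
    (u : FreeAlgebra k (Fin n)) :
    ∃ c : (Fin n → ℕ) →₀ k,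
      u - c.sum (fun γ cc => cc • stdMon (FreeAlgebra.ι k) γ) ∈
        TwoSidedIdeal.span (relSet k q p) := by
  classical
  obtain ⟨-, -, -, -, hker, hli, hsp⟩ := hpbw
  let b : Module.Basis (Fin n → ℕ) k R := Module.Basis.mk hli (by rw [hsp])
  refine ⟨b.repr (FreeAlgebra.lift k x u), ?_⟩
  have key : FreeAlgebra.lift k x
      (u - (b.repr (FreeAlgebra.lift k x u)).sum
        (fun γ cc => cc • stdMon (FreeAlgebra.ι k) γ)) = 0 := by
    rw [map_sub, map_finsuppSum]
    have h2 : ((b.repr (FreeAlgebra.lift k x u)).sum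
        (fun γ cc => FreeAlgebra.lift k x (cc • stdMon (FreeAlgebra.ι k) γ))) =
        FreeAlgebra.lift k x u := by
      calc (b.repr (FreeAlgebra.lift k x u)).sum
            (fun γ cc => FreeAlgebra.lift k x (cc • stdMon (FreeAlgebra.ι k) γ))
          = (b.repr (FreeAlgebra.lift k x u)).sum (fun γ cc => cc • b γ) := by
            refine Finsupp.sum_congr fun γ _ => ?_
            rw [map_smul, lift_stdMon, Module.Basis.mk_apply]
        _ = FreeAlgebra.lift k x u := by
            rw [← Finsupp.linearCombination_apply, Module.Basis.linearCombination_repr]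
    rw [h2, sub_self]
  exact (hker _).1 key

end AuxNF


section AuxNFEnv
variable {k : Type*} [Field k] {R : Type*} [Ring R] [Algebra k R] {n : ℕ}

theorem normal_form_env (x : Fin n → R) (q : Fin n → Fin n → k)
    (p : Fin n → Fin n → ((Fin n → ℕ) →₀ k))
    (le : (Fin n → ℕ) → (Fin n → ℕ) → Prop) (hpbw : IsPBW k R x q p le)
    (u : FreeAlgebra k (Fin (n + n))) :
    ∃ s ∈ Submodule.span k (Set.range (stdMon (FreeAlgebra.ι k (X := Fin (n + n))))),
      (TwoSidedIdeal.span (relSet k (qEnv q) (pEnv p))).ringCon u s := by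
  classical
  set J := TwoSidedIdeal.span (relSet k (qEnv q) (pEnv p)) with hJ
  set c := J.ringCon with hc
  set NF := Submodule.span k (Set.range (stdMon (FreeAlgebra.ι k (X := Fin (n + n))))) with hNF
  have h_gen : ∀ i j : Fin (n + n), i < j → quantumRel k (qEnv q) (pEnv p) i j ∈ J :=
    fun i j h => TwoSidedIdeal.subset_span ⟨i, j, h, rfl⟩
  have hlt_cn : ∀ (i j : Fin n), Fin.castAdd n i < Fin.natAdd n j := by
    intro i j
    rw [Fin.lt_def]
    simp only [Fin.coe_castAdd, Fin.coe_natAdd]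
    have := i.isLt
    omega
  have hC0 : ∀ i j : Fin n,
      c (FreeAlgebra.ι k (Fin.natAdd n j) * FreeAlgebra.ι k (Fin.castAdd n i))
        (FreeAlgebra.ι k (Fin.castAdd n i) * FreeAlgebra.ι k (Fin.natAdd n j)) := by
    intro i j
    refine (J.rel_iff _ _).2 ?_
    rw [← quantumRel_XY q p i j]
    exact h_gen _ _ (hlt_cn i j)
  have hYX : ∀ (j : Fin n) (a : Fin n → ℕ),
      c (FreeAlgebra.ι k (Fin.natAdd n j) *
          stdMon (fun i => FreeAlgebra.ι k (Fin.castAdd n i)) a)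
        (stdMon (fun i => FreeAlgebra.ι k (Fin.castAdd n i)) a *
          FreeAlgebra.ι k (Fin.natAdd n j)) := by
    intro j a
    show c (_ * (List.map (fun i => FreeAlgebra.ι k (Fin.castAdd n i) ^ a i)
      (List.finRange n)).prod) _
    refine rc_comm_list c _ ?_
    intro z hz
    simp only [List.mem_map] at hz
    obtain ⟨l, -, rfl⟩ := hz
    exact rc_comm_pow c (hC0 l j) (a l)
  have hMYX : ∀ (cc a : Fin n → ℕ),
      c (stdMon (fun j => FreeAlgebra.ι k (Fin.natAdd n j)) cc *
          stdMon (fun i => FreeAlgebra.ι k (Fin.castAdd n i)) a)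
        (stdMon (fun i => FreeAlgebra.ι k (Fin.castAdd n i)) a *
          stdMon (fun j => FreeAlgebra.ι k (Fin.natAdd n j)) cc) := by
    intro cc a
    show c ((List.map (fun j => FreeAlgebra.ι k (Fin.natAdd n j) ^ cc j)
      (List.finRange n)).prod * _) _
    refine rc_comm_list' c _ ?_
    intro y hy
    simp only [List.mem_map] at hy
    obtain ⟨l, -, rfl⟩ := hy
    exact rc_comm_pow' c (hYX l a) (cc l)
  have hphiX : ∀ v ∈ TwoSidedIdeal.span (relSet k q p), phiX k n v ∈ J := by
    intro v hv
    refine span_map_mem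
      ((phiX k n : FreeAlgebra k (Fin n) →ₐ[k] FreeAlgebra k (Fin (n + n))) :
        FreeAlgebra k (Fin n) →+* FreeAlgebra k (Fin (n + n))) _ J ?_ v hv
    rintro g ⟨i, j, hij, rfl⟩
    show phiX k n (quantumRel k q p i j) ∈ J
    rw [phiX_quantumRel]
    refine h_gen _ _ ?_
    rw [Fin.lt_def, Fin.coe_castAdd, Fin.coe_castAdd]
    exact hij
  have hphiY : ∀ v ∈ TwoSidedIdeal.span (relSet k q p), unop (phiY k n v) ∈ J := by
    intro v hv
    have hmem : phiY k n v ∈ opIdeal J := by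
      refine span_map_mem
        ((phiY k n : FreeAlgebra k (Fin n) →ₐ[k] (FreeAlgebra k (Fin (n + n)))ᵐᵒᵖ) :
          FreeAlgebra k (Fin n) →+* (FreeAlgebra k (Fin (n + n)))ᵐᵒᵖ) _ (opIdeal J) ?_ v hv
      rintro g ⟨a, b, hab, rfl⟩
      show phiY k n (quantumRel k q p a b) ∈ opIdeal J
      rw [mem_opIdeal, phiY_quantumRel]
      refine h_gen _ _ ?_
      have h2 : b.rev < a.rev := Fin.rev_lt_rev.mpr hab
      rw [Fin.lt_def, Fin.coe_natAdd, Fin.coe_natAdd]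
      rw [Fin.lt_def] at h2
      omega
    exact mem_opIdeal.1 hmem
  have hXa : ∀ a : Fin n → ℕ,
      stdMon (FreeAlgebra.ι k) (Fin.append a (0 : Fin n → ℕ)) =
        stdMon (fun i => FreeAlgebra.ι k (Fin.castAdd n i)) a := by
    intro a; rw [stdMon_append, stdMon_zero, mul_one]
  have hYc : ∀ cc : Fin n → ℕ,
      stdMon (FreeAlgebra.ι k) (Fin.append (0 : Fin n → ℕ) cc) =
        stdMon (fun j => FreeAlgebra.ι k (Fin.natAdd n j)) cc := by
    intro cc; rw [stdMon_append, stdMon_zero, one_mul]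
  have hMX : ∀ a b : Fin n → ℕ,
      ∃ s ∈ Submodule.span k (Set.range fun γ : Fin n → ℕ =>
          stdMon (FreeAlgebra.ι k) (Fin.append γ (0 : Fin n → ℕ))),
        c (stdMon (fun i => FreeAlgebra.ι k (Fin.castAdd n i)) a *
            stdMon (fun i => FreeAlgebra.ι k (Fin.castAdd n i)) b) s := by
    intro a b
    obtain ⟨e, he⟩ := normal_form_R x q p le hpbw
      (stdMon (FreeAlgebra.ι k) a * stdMon (FreeAlgebra.ι k) b)
    refine ⟨e.sum fun γ cc => cc • stdMon (FreeAlgebra.ι k) (Fin.append γ (0 : Fin n → ℕ)),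
      ?_, ?_⟩
    · exact Submodule.sum_mem _ fun γ _ =>
        Submodule.smul_mem _ _ (Submodule.subset_span ⟨γ, rfl⟩)
    · have hmem := hphiX _ he
      rw [map_sub, map_mul, phiX_stdMon, phiX_stdMon, map_finsuppSum] at hmem
      rw [hXa a, hXa b] at hmem
      simp only [map_smul, phiX_stdMon] at hmem
      exact (J.rel_iff _ _).2 hmem
  have hMY : ∀ cc dd : Fin n → ℕ,
      ∃ s ∈ Submodule.span k (Set.range fun γ : Fin n → ℕ =>
          stdMon (FreeAlgebra.ι k) (Fin.append (0 : Fin n → ℕ) γ)),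
        c (stdMon (fun j => FreeAlgebra.ι k (Fin.natAdd n j)) cc *
            stdMon (fun j => FreeAlgebra.ι k (Fin.natAdd n j)) dd) s := by
    intro cc dd
    obtain ⟨e, he⟩ := normal_form_R x q p le hpbw
      (stdMon (FreeAlgebra.ι k) (expRev dd) * stdMon (FreeAlgebra.ι k) (expRev cc))
    refine ⟨e.sum fun γ c2 =>
      c2 • stdMon (FreeAlgebra.ι k) (Fin.append (0 : Fin n → ℕ) (expRev γ)), ?_, ?_⟩
    · exact Submodule.sum_mem _ fun γ _ =>
        Submodule.smul_mem _ _ (Submodule.subset_span ⟨expRev γ, rfl⟩)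
    · have hmem := hphiY _ he
      rw [map_sub, map_mul, unop_sub, unop_mul, phiY_stdMon, phiY_stdMon,
        expRev_expRev, expRev_expRev, hYc, hYc, map_finsuppSum] at hmem
      rw [Finsupp.sum, Finset.unop_sum] at hmem
      simp only [map_smul, unop_smul, phiY_stdMon] at hmem
      refine (J.rel_iff _ _).2 ?_
      rw [Finsupp.sum]
      exact hmem
  have hprod : ∀ γ δ : Fin (n + n) → ℕ,
      ∃ s ∈ NF, c (stdMon (FreeAlgebra.ι k) γ * stdMon (FreeAlgebra.ι k) δ) s := by
    intro γ δ
    obtain ⟨sX, hsX, hcX⟩ := hMX (splitL γ) (splitL δ)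
    obtain ⟨sY, hsY, hcY⟩ := hMY (splitR γ) (splitR δ)
    refine ⟨sX * sY, ?_, ?_⟩
    · have h1 := Submodule.mul_mem_mul hsX hsY
      rw [Submodule.span_mul_span] at h1
      refine Submodule.span_le.2 ?_ h1
      rintro z ⟨z1, ⟨a, rfl⟩, z2, ⟨b2, rfl⟩, rfl⟩
      refine Submodule.subset_span ⟨Fin.append a b2, ?_⟩
      dsimp only
      rw [stdMon_append, hXa, hYc]
    · have hdγ : stdMon (FreeAlgebra.ι k) γ =
          stdMon (fun i => FreeAlgebra.ι k (Fin.castAdd n i)) (splitL γ) *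
            stdMon (fun j => FreeAlgebra.ι k (Fin.natAdd n j)) (splitR γ) := by
        conv_lhs => rw [← append_splitLR γ]
        rw [stdMon_append]
      have hdδ : stdMon (FreeAlgebra.ι k) δ =
          stdMon (fun i => FreeAlgebra.ι k (Fin.castAdd n i)) (splitL δ) *
            stdMon (fun j => FreeAlgebra.ι k (Fin.natAdd n j)) (splitR δ) := by
        conv_lhs => rw [← append_splitLR δ]
        rw [stdMon_append]
      have step1 : c (stdMon (FreeAlgebra.ι k) γ * stdMon (FreeAlgebra.ι k) δ)
          (stdMon (fun i => FreeAlgebra.ι k (Fin.castAdd n i)) (splitL γ) *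
            (stdMon (fun i => FreeAlgebra.ι k (Fin.castAdd n i)) (splitL δ) *
              (stdMon (fun j => FreeAlgebra.ι k (Fin.natAdd n j)) (splitR γ) *
                stdMon (fun j => FreeAlgebra.ι k (Fin.natAdd n j)) (splitR δ)))) := by
        rw [hdγ, hdδ]
        simp only [mul_assoc]
        refine c.mul (c.refl _) ?_
        rw [← mul_assoc, ← mul_assoc]
        exact c.mul (hMYX (splitR γ) (splitL δ)) (c.refl _)
      have step2 : c (stdMon (fun i => FreeAlgebra.ι k (Fin.castAdd n i)) (splitL γ) *
            (stdMon (fun i => FreeAlgebra.ι k (Fin.castAdd n i)) (splitL δ) *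
              (stdMon (fun j => FreeAlgebra.ι k (Fin.natAdd n j)) (splitR γ) *
                stdMon (fun j => FreeAlgebra.ι k (Fin.natAdd n j)) (splitR δ))))
          (sX * sY) := by
        rw [← mul_assoc]
        exact c.mul hcX hcY
      exact c.trans step1 step2
  have key : ∀ s ∈ NF, ∀ t ∈ NF, ∃ w ∈ NF, c (s * t) w := by
    intro s hs
    induction hs using Submodule.span_induction with
    | mem s hsgen =>
      obtain ⟨γ, rfl⟩ := hsgen
      intro t ht
      induction ht using Submodule.span_induction with
      | mem t htgen =>
        obtain ⟨δ, rfl⟩ := htgen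
        exact hprod γ δ
      | zero => exact ⟨0, Submodule.zero_mem _, by rw [mul_zero]; exact c.refl 0⟩
      | add t1 t2 ht1 ht2 ih1 ih2 =>
        obtain ⟨w1, hw1, hcw1⟩ := ih1
        obtain ⟨w2, hw2, hcw2⟩ := ih2
        exact ⟨w1 + w2, Submodule.add_mem _ hw1 hw2, by rw [mul_add]; exact c.add hcw1 hcw2⟩
      | smul r t ht ih =>
        obtain ⟨w, hw, hcw⟩ := ih
        exact ⟨r • w, Submodule.smul_mem _ _ hw, by rw [mul_smul_comm]; exact rc_smul c r hcw⟩
    | zero => exact fun t ht => ⟨0, Submodule.zero_mem _, by rw [zero_mul]; exact c.refl 0⟩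
    | add s1 s2 hs1 hs2 ih1 ih2 =>
      intro t ht
      obtain ⟨w1, hw1, hcw1⟩ := ih1 t ht
      obtain ⟨w2, hw2, hcw2⟩ := ih2 t ht
      exact ⟨w1 + w2, Submodule.add_mem _ hw1 hw2, by rw [add_mul]; exact c.add hcw1 hcw2⟩
    | smul r s hsmem ih =>
      intro t ht
      obtain ⟨w, hw, hcw⟩ := ih t ht
      exact ⟨r • w, Submodule.smul_mem _ _ hw, by rw [smul_mul_assoc]; exact rc_smul c r hcw⟩
  induction u using FreeAlgebra.induction with
  | grade0 r =>
    refine ⟨algebraMap k _ r, ?_, c.refl _⟩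
    rw [Algebra.algebraMap_eq_smul_one]
    refine Submodule.smul_mem _ _ (Submodule.subset_span ⟨0, ?_⟩)
    rw [stdMon_zero]
  | grade1 i =>
    refine ⟨FreeAlgebra.ι k i, Submodule.subset_span ⟨Pi.single i 1, ?_⟩, c.refl _⟩
    rw [stdMon_single]
  | mul a b iha ihb =>
    obtain ⟨s, hs, hcs⟩ := iha
    obtain ⟨t, ht, hct⟩ := ihb
    obtain ⟨w, hw, hcw⟩ := key s hs t ht
    exact ⟨w, hw, c.trans (c.mul hcs hct) hcw⟩
  | add a b iha ihb =>
    obtain ⟨s, hs, hcs⟩ := iha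
    obtain ⟨t, ht, hct⟩ := ihb
    exact ⟨s + t, Submodule.add_mem _ hs ht, c.add hcs hct⟩

end AuxNFEnv


section AuxFinal
variable {n : ℕ}

theorem splitL_append (a c : Fin n → ℕ) : splitL (Fin.append a c) = a :=
  funext fun i => Fin.append_left _ _ i

theorem splitR_append (a c : Fin n → ℕ) : splitR (Fin.append a c) = c :=
  funext fun j => Fin.append_right _ _ j

theorem expRev_single (a : Fin n) : expRev (Pi.single a 1 : Fin n → ℕ) = Pi.single a.rev 1 := by
  funext i
  simp only [expRev, Pi.single_apply]
  exact if_congr ⟨fun h => by rw [← h, Fin.rev_rev], fun h => by rw [h, Fin.rev_rev]⟩ rfl rfl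

theorem append_add (a b c d : Fin n → ℕ) :
    Fin.append a c + Fin.append b d = Fin.append (a + b) (c + d) := by
  funext l
  cases l using Fin.addCases with
  | left l =>
    rw [Pi.add_apply, Fin.append_left, Fin.append_left, Fin.append_left]
    rfl
  | right l =>
    rw [Pi.add_apply, Fin.append_right, Fin.append_right, Fin.append_right]
    rfl

theorem single_lt (i : Fin (n + n)) (hi : (i : ℕ) < n) :
    (Pi.single i 1 : Fin (n + n) → ℕ) =
      Fin.append (Pi.single (⟨(i : ℕ), hi⟩ : Fin n) 1) (0 : Fin n → ℕ) := by
  funext l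
  cases l using Fin.addCases with
  | left l =>
    rw [Fin.append_left]
    simp only [Pi.single_apply]
    exact if_congr (by simp [Fin.ext_iff]) rfl rfl
  | right l =>
    rw [Fin.append_right]
    simp only [Pi.single_apply]
    rw [if_neg (by simp only [Fin.ext_iff, Fin.coe_natAdd]; omega)]
    rfl

theorem single_ge (i : Fin (n + n)) (hi : ¬ (i : ℕ) < n) :
    (Pi.single i 1 : Fin (n + n) → ℕ) =
      Fin.append (0 : Fin n → ℕ)
        (Pi.single (⟨(i : ℕ) - n, by have := i.isLt; omega⟩ : Fin n) 1) := by
  funext l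
  cases l using Fin.addCases with
  | left l =>
    rw [Fin.append_left]
    simp only [Pi.single_apply]
    rw [if_neg (by simp only [Fin.ext_iff, Fin.coe_castAdd]; omega)]
    rfl
  | right l =>
    rw [Fin.append_right]
    simp only [Pi.single_apply]
    exact if_congr (by simp only [Fin.ext_iff, Fin.coe_natAdd]; omega) rfl rfl

theorem expRev_single_add (u v : Fin n) :
    expRev (Pi.single u.rev 1 + Pi.single v.rev 1) = Pi.single v 1 + Pi.single u 1 := by
  have h : expRev (Pi.single u.rev 1 + Pi.single v.rev 1) =
      expRev (Pi.single u.rev (1:ℕ)) + expRev (Pi.single v.rev 1) := rfl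
  rw [h, expRev_single, expRev_single, Fin.rev_rev, Fin.rev_rev, add_comm]

theorem ltOf_append_X
    {o : ((Fin n → ℕ) × (Fin n → ℕ)) → ((Fin n → ℕ) × (Fin n → ℕ)) → Prop}
    {α σ : Fin n → ℕ} (h : o (α, (0 : Fin n → ℕ)) (σ, (0 : Fin n → ℕ))) (hne : α ≠ σ) :
    ltOf (liftPairOrd o) (Fin.append α (0 : Fin n → ℕ)) (Fin.append σ (0 : Fin n → ℕ)) := by
  constructor
  · show o (splitL (Fin.append α (0 : Fin n → ℕ)), splitR (Fin.append α (0 : Fin n → ℕ)))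
      (splitL (Fin.append σ (0 : Fin n → ℕ)), splitR (Fin.append σ (0 : Fin n → ℕ)))
    rw [splitL_append, splitR_append, splitL_append, splitR_append]
    exact h
  · intro e
    apply hne
    have h2 := congrArg splitL e
    rwa [splitL_append, splitL_append] at h2

theorem ltOf_append_Y
    {o : ((Fin n → ℕ) × (Fin n → ℕ)) → ((Fin n → ℕ) × (Fin n → ℕ)) → Prop}
    {γ τ : Fin n → ℕ} (h : o ((0 : Fin n → ℕ), γ) ((0 : Fin n → ℕ), τ)) (hne : γ ≠ τ) :
    ltOf (liftPairOrd o) (Fin.append (0 : Fin n → ℕ) γ) (Fin.append (0 : Fin n → ℕ) τ) := by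
  constructor
  · show o (splitL (Fin.append (0 : Fin n → ℕ) γ), splitR (Fin.append (0 : Fin n → ℕ) γ))
      (splitL (Fin.append (0 : Fin n → ℕ) τ), splitR (Fin.append (0 : Fin n → ℕ) τ))
    rw [splitL_append, splitR_append, splitL_append, splitR_append]
    exact h
  · intro e
    apply hne
    have h2 := congrArg splitR e
    rwa [splitR_append, splitR_append] at h2

end AuxFinal

/-- If `R = k{x₁,…,xₙ; Q, ⪯}` is a PBW algebra, then the enveloping algebra
`R^env = R ⊗[k] Rᵐᵒᵖ` is the PBW algebra `k{X₁,…,Xₙ,Yₙ,…,Y₁; Q*, ≼}` where `Xₗ = xₗ⊗1`,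
`Yₗ = 1⊗xₗ`, `Q*` consists of the relations `XⱼXᵢ − qᵢⱼXᵢXⱼ − pᵢⱼ⊗1` (`i < j`),
`YⱼXᵢ − XᵢYⱼ`, and `YᵢYⱼ − qᵢⱼYⱼYᵢ − 1⊗pᵢⱼ` (`i < j`), and `≼` is any of the four orders
`⪯^c`, `⪯_c`, `⪯*`, `⪯_*` on `ℕ^{2n}`; moreover the standard monomial of exponent `(a,c)` is
`x^a ⊗ x^{c^op}`. -/
theorem envelopingAlgebra_isPBW
    (x : Fin n → R) (q : Fin n → Fin n → k) (p : Fin n → Fin n → ((Fin n → ℕ) →₀ k))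
    (le : (Fin n → ℕ) → (Fin n → ℕ) → Prop) (hpbw : IsPBW k R x q p le)
    (le2 : (Fin (n + n) → ℕ) → (Fin (n + n) → ℕ) → Prop)
    (hle2 : le2 = liftPairOrd (upCompOrd le) ∨ le2 = liftPairOrd (downCompOrd le) ∨
      le2 = liftPairOrd (elimUpOrd le) ∨ le2 = liftPairOrd (elimDownOrd le)) :
    IsPBW k (R ⊗[k] Rᵐᵒᵖ) (envGens x) (qEnv q) (pEnv p) le2 ∧
    ∀ a c : Fin n → ℕ,
      stdMon (envGens (k := k) x) (Fin.append a c) =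
        stdMon x a ⊗ₜ[k] op (stdMon x (expRev c)) := by
  classical
  obtain ⟨hadm, hqne, hbound, hsurjR, hker, hli, hsp⟩ := hpbw
  have hpbw' : IsPBW k R x q p le := ⟨hadm, hqne, hbound, hsurjR, hker, hli, hsp⟩
  -- the basis of R ⊗ Rᵐᵒᵖ given by standard monomials
  let b : Module.Basis (Fin n → ℕ) k R := Module.Basis.mk hli (by rw [hsp])
  let bop : Module.Basis (Fin n → ℕ) k Rᵐᵒᵖ := b.map (MulOpposite.opLinearEquiv k)
  let bE : Module.Basis ((Fin n → ℕ) × (Fin n → ℕ)) k (R ⊗[k] Rᵐᵒᵖ) := Module.Basis.tensorProduct b bop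
  let e : (Fin (n + n) → ℕ) ≃ ((Fin n → ℕ) × (Fin n → ℕ)) :=
    { toFun := fun α => (splitL α, expRev (splitR α))
      invFun := fun pr => Fin.append pr.1 (expRev pr.2)
      left_inv := fun α => by
        show Fin.append (splitL α) (expRev (expRev (splitR α))) = α
        rw [expRev_expRev, append_splitLR]
      right_inv := fun pr => by
        show (splitL (Fin.append pr.1 (expRev pr.2)),
          expRev (splitR (Fin.append pr.1 (expRev pr.2)))) = pr
        rw [splitL_append, splitR_append, expRev_expRev] }
  have hcomp : stdMon (envGens (k := k) x) = (fun α => bE (e α)) := by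
    funext α
    conv_lhs => rw [← append_splitLR α]
    rw [stdMon_envGens]
    show _ = bE (splitL α, expRev (splitR α))
    rw [Module.Basis.tensorProduct_apply, Module.Basis.map_apply, Module.Basis.mk_apply, Module.Basis.mk_apply]
    rfl
  have hli2 : LinearIndependent k (stdMon (envGens (k := k) x)) := by
    rw [hcomp]
    exact bE.linearIndependent.comp e e.injective
  have hsp2 : Submodule.span k (Set.range (stdMon (envGens (k := k) x))) = ⊤ := by
    rw [hcomp]
    have h1 : Set.range (fun α => bE (e α)) = Set.range bE := e.surjective.range_comp bE
    rw [h1, Module.Basis.span_eq]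
  have hliftmon : ∀ γ, FreeAlgebra.lift k (envGens (k := k) x) (stdMon (FreeAlgebra.ι k) γ) =
      stdMon (envGens (k := k) x) γ := fun γ => lift_stdMon _ _
  -- the relations of R hold
  have hrel0 : ∀ i j : Fin n, i < j → FreeAlgebra.lift k x (quantumRel k q p i j) = 0 :=
    fun i j h => (hker _).2 (TwoSidedIdeal.subset_span ⟨i, j, h, rfl⟩)
  -- compositions
  have hcompX : (FreeAlgebra.lift k (envGens (k := k) x)).comp (phiX k n) =
      (Algebra.TensorProduct.includeLeft : R →ₐ[k] R ⊗[k] Rᵐᵒᵖ).comp (FreeAlgebra.lift k x) := by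
    refine FreeAlgebra.hom_ext (funext fun l => ?_)
    show FreeAlgebra.lift k (envGens (k := k) x) (phiX k n (FreeAlgebra.ι k l)) =
      (Algebra.TensorProduct.includeLeft : R →ₐ[k] R ⊗[k] Rᵐᵒᵖ)
        (FreeAlgebra.lift k x (FreeAlgebra.ι k l))
    rw [phiX_ι, FreeAlgebra.lift_ι_apply, FreeAlgebra.lift_ι_apply, envGens_castAdd]
    rfl
  have hcompY : (AlgHom.op (FreeAlgebra.lift k (envGens (k := k) x))).comp (phiY k n) =
      ((AlgHom.op (Algebra.TensorProduct.includeRight : Rᵐᵒᵖ →ₐ[k] R ⊗[k] Rᵐᵒᵖ)).comp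
        (AlgEquiv.opOp k R).toAlgHom).comp (FreeAlgebra.lift k x) := by
    refine FreeAlgebra.hom_ext (funext fun l => ?_)
    show AlgHom.op (FreeAlgebra.lift k (envGens (k := k) x)) (phiY k n (FreeAlgebra.ι k l)) =
      AlgHom.op (Algebra.TensorProduct.includeRight : Rᵐᵒᵖ →ₐ[k] R ⊗[k] Rᵐᵒᵖ)
        ((AlgEquiv.opOp k R) (FreeAlgebra.lift k x (FreeAlgebra.ι k l)))
    rw [phiY_ι, FreeAlgebra.lift_ι_apply]
    show op (FreeAlgebra.lift k (envGens (k := k) x)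
      (FreeAlgebra.ι k (Fin.natAdd n l.rev))) = _
    rw [FreeAlgebra.lift_ι_apply, envGens_natAdd, Fin.rev_rev]
    rfl
  -- generators of the enveloping relations vanish
  have hgen0 : ∀ g ∈ relSet k (qEnv q) (pEnv p),
      FreeAlgebra.lift k (envGens (k := k) x) g = 0 := by
    rintro g ⟨i, j, hij, rfl⟩
    have hijn := Fin.lt_def.mp hij
    by_cases hi : (i : ℕ) < n
    · by_cases hj : (j : ℕ) < n
      · -- X–X relation
        have hci : Fin.castAdd n (⟨(i : ℕ), hi⟩ : Fin n) = i := by ext; rfl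
        have hcj : Fin.castAdd n (⟨(j : ℕ), hj⟩ : Fin n) = j := by ext; rfl
        have key := phiX_quantumRel q p (⟨(i : ℕ), hi⟩ : Fin n) (⟨(j : ℕ), hj⟩ : Fin n)
        rw [hci, hcj] at key
        rw [← key]
        have h2 : FreeAlgebra.lift k (envGens (k := k) x)
            (phiX k n (quantumRel k q p ⟨(i : ℕ), hi⟩ ⟨(j : ℕ), hj⟩)) =
            ((FreeAlgebra.lift k (envGens (k := k) x)).comp (phiX k n))
              (quantumRel k q p ⟨(i : ℕ), hi⟩ ⟨(j : ℕ), hj⟩) := rfl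
        rw [h2, hcompX]
        show (Algebra.TensorProduct.includeLeft : R →ₐ[k] R ⊗[k] Rᵐᵒᵖ)
          (FreeAlgebra.lift k x (quantumRel k q p ⟨(i : ℕ), hi⟩ ⟨(j : ℕ), hj⟩)) = 0
        rw [hrel0 _ _ (by rw [Fin.mk_lt_mk]; exact hijn), map_zero]
      · -- X–Y relation
        have hci : Fin.castAdd n (⟨(i : ℕ), hi⟩ : Fin n) = i := by ext; rfl
        have hcj : Fin.natAdd n (⟨(j : ℕ) - n, by have := j.isLt; omega⟩ : Fin n) = j := by
          ext; simp only [Fin.coe_natAdd]; omega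
        rw [← hci, ← hcj, quantumRel_XY]
        rw [map_sub, map_mul, map_mul]
        simp only [FreeAlgebra.lift_ι_apply]
        rw [envGens_castAdd, envGens_natAdd, Algebra.TensorProduct.tmul_mul_tmul,
          Algebra.TensorProduct.tmul_mul_tmul, one_mul, mul_one, one_mul, mul_one, sub_self]
    · -- Y–Y relation
      have hj : ¬ (j : ℕ) < n := by omega
      set i2 : Fin n := ⟨(i : ℕ) - n, by have := i.isLt; omega⟩ with hi2def
      set j2 : Fin n := ⟨(j : ℕ) - n, by have := j.isLt; omega⟩ with hj2def
      have hci : Fin.natAdd n i2 = i := by ext; simp only [Fin.coe_natAdd, hi2def]; omega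
      have hcj : Fin.natAdd n j2 = j := by ext; simp only [Fin.coe_natAdd, hj2def]; omega
      have key := phiY_quantumRel q p j2.rev i2.rev
      rw [Fin.rev_rev, Fin.rev_rev, hci, hcj] at key
      rw [← key]
      have h2 : FreeAlgebra.lift k (envGens (k := k) x)
          (unop (phiY k n (quantumRel k q p j2.rev i2.rev))) =
          unop ((AlgHom.op (FreeAlgebra.lift k (envGens (k := k) x))).comp (phiY k n)
            (quantumRel k q p j2.rev i2.rev)) := rfl
      rw [h2, hcompY]
      have hlt2 : j2.rev < i2.rev := by
        rw [Fin.rev_lt_rev, Fin.mk_lt_mk]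
        omega
      show unop (AlgHom.op (Algebra.TensorProduct.includeRight : Rᵐᵒᵖ →ₐ[k] R ⊗[k] Rᵐᵒᵖ)
        ((AlgEquiv.opOp k R)
          (FreeAlgebra.lift k x (quantumRel k q p j2.rev i2.rev)))) = 0
      rw [hrel0 _ _ hlt2, map_zero, map_zero, unop_zero]
  have hfwd : ∀ v ∈ TwoSidedIdeal.span (relSet k (qEnv q) (pEnv p)),
      FreeAlgebra.lift k (envGens (k := k) x) v = 0 := by
    intro v hv
    have h2 := span_map_mem (RingHom.id (FreeAlgebra k (Fin (n + n)))) _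
      (TwoSidedIdeal.ker (FreeAlgebra.lift k (envGens (k := k) x)))
      (fun g hg =>
        (TwoSidedIdeal.mem_ker (FreeAlgebra.lift k (envGens (k := k) x))).2 (hgen0 g hg)) v hv
    exact (TwoSidedIdeal.mem_ker (FreeAlgebra.lift k (envGens (k := k) x))).1 h2
  refine ⟨⟨?_, ?_, ?_, ?_, ?_, hli2, hsp2⟩, fun a c => stdMon_envGens x a c⟩
  · -- admissibility
    rcases hle2 with rfl | rfl | rfl | rfl
    · exact isAdmissible_liftPairOrd (isAdmissible_upCompOrd hadm)
    · exact isAdmissible_liftPairOrd (isAdmissible_downCompOrd hadm)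
    · exact isAdmissible_liftPairOrd (isAdmissible_elimUpOrd hadm)
    · exact isAdmissible_liftPairOrd (isAdmissible_elimDownOrd hadm)
  · -- nonzero scalars
    intro i j hij
    have hijn := Fin.lt_def.mp hij
    by_cases hi : (i : ℕ) < n
    · by_cases hj : (j : ℕ) < n
      · rw [qEnv, dif_pos hi, dif_pos hj]
        exact hqne _ _ (by rw [Fin.mk_lt_mk]; exact hijn)
      · rw [qEnv, dif_pos hi, dif_neg hj]
        exact one_ne_zero
    · have hj : ¬ (j : ℕ) < n := by omega
      rw [qEnv, dif_neg hi, dif_neg hj]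
      refine hqne _ _ ?_
      rw [Fin.rev_lt_rev, Fin.mk_lt_mk]
      omega
  · -- bounded tails
    intro i j hij γ hγ
    have hijn := Fin.lt_def.mp hij
    by_cases hi : (i : ℕ) < n
    · by_cases hj : (j : ℕ) < n
      · -- X–X tails
        rw [pEnv, dif_pos hi, dif_pos hj] at hγ
        have h2 := Finsupp.mapDomain_support hγ
        rw [Finset.mem_image] at h2
        obtain ⟨α, hα, rfl⟩ := h2
        have hlt := hbound _ _ (by rw [Fin.mk_lt_mk]; exact hijn) α hα
        rw [single_lt i hi, single_lt j hj, append_add, add_zero]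
        rcases hle2 with rfl | rfl | rfl | rfl
        · exact ltOf_append_X (upCompOrd_X hlt) hlt.2
        · exact ltOf_append_X (downCompOrd_X hlt) hlt.2
        · exact ltOf_append_X (elimUpOrd_X hlt) hlt.2
        · exact ltOf_append_X (elimDownOrd_X hlt) hlt.2
      · -- mixed tails: empty
        rw [pEnv, dif_pos hi, dif_neg hj] at hγ
        simp at hγ
    · -- Y–Y tails
      have hj : ¬ (j : ℕ) < n := by omega
      rw [pEnv, dif_neg hi, dif_neg hj] at hγ
      have h2 := Finsupp.mapDomain_support hγ
      rw [Finset.mem_image] at h2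
      obtain ⟨γ0, hγ0, rfl⟩ := h2
      have hlt := hbound _ _ (by rw [Fin.rev_lt_rev, Fin.mk_lt_mk]; omega) γ0 hγ0
      rw [single_ge i hi, single_ge j hj, append_add, add_zero, ← expRev_single_add]
      rcases hle2 with rfl | rfl | rfl | rfl
      · exact ltOf_append_Y (upCompOrd_Y hlt) (fun h => hlt.2 (expRev_inj h))
      · exact ltOf_append_Y (downCompOrd_Y hlt) (fun h => hlt.2 (expRev_inj h))
      · exact ltOf_append_Y (elimUpOrd_Y hlt) (fun h => hlt.2 (expRev_inj h))
      · exact ltOf_append_Y (elimDownOrd_Y hlt) (fun h => hlt.2 (expRev_inj h))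
  · -- surjectivity
    intro z
    have hz : z ∈ Submodule.span k (Set.range (stdMon (envGens (k := k) x))) := by
      rw [hsp2]; trivial
    induction hz using Submodule.span_induction with
    | mem w hw =>
      obtain ⟨γ, rfl⟩ := hw
      exact ⟨stdMon (FreeAlgebra.ι k) γ, hliftmon γ⟩
    | zero => exact ⟨0, map_zero _⟩
    | add a b _ _ iha ihb =>
      obtain ⟨ua, hua⟩ := iha
      obtain ⟨ub, hub⟩ := ihb
      exact ⟨ua + ub, by rw [map_add, hua, hub]⟩
    | smul r a _ ih =>
      obtain ⟨ua, hua⟩ := ih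
      exact ⟨r • ua, by rw [map_smul, hua]⟩
  · -- the kernel
    intro a
    constructor
    · intro ha
      obtain ⟨s, hsNF, hcs⟩ := normal_form_env x q p le hpbw' a
      have hdiff : a - s ∈ TwoSidedIdeal.span (relSet k (qEnv q) (pEnv p)) :=
        ((TwoSidedIdeal.span (relSet k (qEnv q) (pEnv p))).rel_iff _ _).1 hcs
      have hls : FreeAlgebra.lift k (envGens (k := k) x) s = 0 := by
        have h2 := hfwd _ hdiff
        rw [map_sub, ha, zero_sub, neg_eq_zero] at h2
        exact h2
      obtain ⟨cf, hcf⟩ := Finsupp.mem_span_range_iff_exists_finsupp.1 hsNF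
      have h3 : Finsupp.linearCombination k (stdMon (envGens (k := k) x)) cf = 0 := by
        rw [Finsupp.linearCombination_apply]
        rw [← hls, ← hcf, map_finsuppSum]
        exact Finsupp.sum_congr fun γ _ => by rw [map_smul, hliftmon]
      have hcf0 : cf = 0 := linearIndependent_iff.1 hli2 cf h3
      have hs0 : s = 0 := by
        rw [← hcf, hcf0, Finsupp.sum_zero_index]
      rw [hs0, sub_zero] at hdiff
      exact hdiff
    · intro ha
      exact hfwd a ha


end EnvPBW
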